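/- Let A be a commutative ring, I a set, R = A[(X_i)_{i∈I}] the polynomial ring, G a commutative group, ψ : ℤ^(⊕I) → G a surjective group homomorphism, H ≤ G a subgroup of finite index, and S = R_(H). For every finitely generated monomial ideal 𝔞 ⊆ R one has Γ_{𝔞_(H)} = Γ_{⌊𝔞⌋_H} = Γ_{⌊𝔞⌋_(H)} as torsion functors over S; i.e., for every S-module M and every x ∈ M, the three conditions '∃ n, (𝔞_(H))^n ⊆ Ann_S(x)', '∃ n, (⌊𝔞⌋_H)^n ⊆ Ann_S(x)' and '∃ n, (⌊𝔞⌋_(H))^n ⊆ Ann_S(x)' are equivalent. (Proposition 2.30.) -/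

import Mathlib

set_option synthInstance.maxHeartbeats 1000000
set_option maxHeartbeats 1000000

open MvPolynomial

/-- `suppInd μ` is the characteristic function of the support of `μ`,
so that `X^(suppInd μ) = ∏_{i : μ i > 0} X i`. -/
noncomputable def suppInd {I : Type v} (μ : I →₀ ℕ) : I →₀ ℕ :=
  μ.mapRange (fun n => if n = 0 then 0 else 1) (by simp)

/-- The canonical embedding `ℕ^(⊕I) → ℤ^(⊕I)`. -/
noncomputable def natToInt {I : Type v} (μ : I →₀ ℕ) : I →₀ ℤ :=
  Finsupp.mapRange (Nat.cast : ℕ → ℤ) Nat.cast_zero μ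

/-- A monomial ideal of `A[(X_i)_{i ∈ I}]` is an ideal generated by a set of monomials. -/
def IsMonomialIdeal {A : Type u} [CommRing A] {I : Type v}
    (𝔞 : Ideal (MvPolynomial I A)) : Prop :=
  ∃ E : Set (I →₀ ℕ), 𝔞 = Ideal.span ((fun μ => monomial μ (1 : A)) '' E)

/-- `⌊𝔞⌋` is the ideal generated by the monomials `X^(suppInd μ)` for all monomials
`X^μ ∈ 𝔞`. -/
noncomputable def mvFloor {A : Type u} [CommRing A] {I : Type v}
    (𝔞 : Ideal (MvPolynomial I A)) : Ideal (MvPolynomial I A) :=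
  Ideal.span {f | ∃ μ : I →₀ ℕ, monomial μ (1 : A) ∈ 𝔞 ∧ f = monomial (suppInd μ) (1 : A)}

/-- The degree restriction `S = R_(H)` of `R = A[(X_i)_{i ∈ I}]` (graded via
`ψ : ℤ^(⊕I) → G`) to a subgroup `H ≤ G`: the `A`-subalgebra of `R` generated by the
monomials `X^μ` whose degree `ψ(μ)` lies in `H`. -/
noncomputable def degRestrict (A : Type u) [CommRing A] {I : Type v} {G : Type w} [AddCommGroup G]
    (ψ : (I →₀ ℤ) →+ G) (H : AddSubgroup G) : Subalgebra A (MvPolynomial I A) :=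
  Algebra.adjoin A {f | ∃ μ : I →₀ ℕ, ψ (natToInt μ) ∈ H ∧ f = monomial μ (1 : A)}

/-- The degree restriction `𝔠_(H) = 𝔠 ∩ S` of an ideal `𝔠` of `R`, as an ideal of
`S = R_(H)`. -/
noncomputable def idealRestrict {A : Type u} [CommRing A] {I : Type v} {G : Type w} [AddCommGroup G]
    (ψ : (I →₀ ℤ) →+ G) (H : AddSubgroup G) (𝔠 : Ideal (MvPolynomial I A)) :
    Ideal (degRestrict A ψ H) :=
  Ideal.comap (degRestrict A ψ H).val 𝔠

/-- `E(𝔞)`: the set of minimal elements of `{μ ∈ ℕ^(⊕I) | X^μ ∈ 𝔞}` with respect to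
the componentwise order. -/
def Emin {A : Type u} [CommRing A] {I : Type v} (𝔞 : Ideal (MvPolynomial I A)) :
    Set (I →₀ ℕ) :=
  {μ | monomial μ (1 : A) ∈ 𝔞 ∧ ∀ ν : I →₀ ℕ, monomial ν (1 : A) ∈ 𝔞 → ν ≤ μ → ν = μ}

/-- `m_μ`: the least `m ∈ ℕ` such that `X^(m • suppInd μ) ∈ 𝔞_(H) = 𝔞 ∩ S`. -/
noncomputable def mdeg {A : Type u} [CommRing A] {I : Type v} {G : Type w} [AddCommGroup G]
    (ψ : (I →₀ ℤ) →+ G) (H : AddSubgroup G) (𝔞 : Ideal (MvPolynomial I A))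
    (μ : I →₀ ℕ) : ℕ :=
  sInf {m : ℕ | monomial (m • suppInd μ) (1 : A) ∈ 𝔞 ∧
    monomial (m • suppInd μ) (1 : A) ∈ degRestrict A ψ H}

/-- `⌊𝔞⌋_H`: the ideal of `S = R_(H)` generated by the monomials `X^(m_μ • suppInd μ)`
for `μ ∈ E(𝔞)`. -/
noncomputable def floorH {A : Type u} [CommRing A] {I : Type v} {G : Type w} [AddCommGroup G]
    (ψ : (I →₀ ℤ) →+ G) (H : AddSubgroup G) (𝔞 : Ideal (MvPolynomial I A)) :
    Ideal (degRestrict A ψ H) :=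
  Ideal.span {s | ∃ μ ∈ Emin 𝔞,
    (s : MvPolynomial I A) = monomial (mdeg ψ H 𝔞 μ • suppInd μ) (1 : A)}

/-!
`𝔞_(H)` lies between `⌊𝔞⌋_H` and `⌊𝔞⌋_(H)`, so it suffices that some power of `⌊𝔞⌋_(H)` lies in
`⌊𝔞⌋_H`. In `R`, the ideal `⌊𝔞⌋` is finitely generated and lies in the radical of the extension
`⌊𝔞⌋_H R`, so `⌊𝔞⌋^k ⊆ ⌊𝔞⌋_H R` for some `k`.
Contracting back to `S` loses nothing: `⌊𝔞⌋_H R` is generated by monomials of `S`, and dividing a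
monomial of `S` by one of them leaves a monomial of `S`.
-/

section

variable {A : Type u} [CommRing A] {I : Type v} {G : Type w} [AddCommGroup G]

lemma suppInd_apply (μ : I →₀ ℕ) (i : I) : suppInd μ i = if μ i = 0 then 0 else 1 :=
  Finsupp.mapRange_apply

lemma suppInd_le (μ : I →₀ ℕ) : suppInd μ ≤ μ := fun i => by
  rw [suppInd_apply]; split_ifs <;> omega

lemma suppInd_mono {μ ν : I →₀ ℕ} (h : μ ≤ ν) : suppInd μ ≤ suppInd ν := fun i => by
  have := h i
  simp only [suppInd_apply]; split_ifs <;> omega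

lemma le_smul_suppInd {μ : I →₀ ℕ} {m : ℕ} (hm : ∀ i, μ i ≤ m) : μ ≤ m • suppInd μ := fun i => by
  have := hm i
  simp only [Finsupp.smul_apply, suppInd_apply, smul_eq_mul]; split_ifs <;> omega

lemma monomial_one_mem_of_le {𝔠 : Ideal (MvPolynomial I A)} {μ ν : I →₀ ℕ}
    (h : monomial μ (1 : A) ∈ 𝔠) (hle : μ ≤ ν) : monomial ν (1 : A) ∈ 𝔠 :=
  𝔠.mem_of_dvd ((monomial_dvd_monomial).2 ⟨Or.inr hle, one_dvd _⟩) h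

/-- `{μ | ψ(μ) ∈ H}`, the exponents of the monomials of `S = R_(H)`. -/
noncomputable def degExponents (ψ : (I →₀ ℤ) →+ G) (H : AddSubgroup G) : AddSubmonoid (I →₀ ℕ) :=
  H.toAddSubmonoid.comap (ψ.comp (Finsupp.mapRange.addMonoidHom (Nat.castAddMonoidHom ℤ)))

section degExponents

variable {ψ : (I →₀ ℤ) →+ G} {H : AddSubgroup G}

lemma mem_degExponents {μ : I →₀ ℕ} : μ ∈ degExponents ψ H ↔ ψ (natToInt μ) ∈ H := Iff.rfl

lemma tsub_mem_degExponents {μ ν : I →₀ ℕ} (hμ : μ ∈ degExponents ψ H)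
    (hν : ν ∈ degExponents ψ H) (hle : ν ≤ μ) : μ - ν ∈ degExponents ψ H := by
  rw [degExponents, AddSubmonoid.mem_comap] at *
  have h := H.sub_mem hμ hν
  rwa [← tsub_add_cancel_of_le hle, map_add, add_sub_cancel_right] at h

lemma degRestrict_toSubmodule :
    Subalgebra.toSubmodule (degRestrict A ψ H) =
      restrictSupport A (degExponents ψ H : Set (I →₀ ℕ)) := by
  have hgen : {f | ∃ μ : I →₀ ℕ, ψ (natToInt μ) ∈ H ∧ f = monomial μ (1 : A)} =
      (monomial · 1) '' (degExponents ψ H : Set (I →₀ ℕ)) := by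
    ext f
    simp only [Set.mem_ofPred_eq, Set.mem_image, SetLike.mem_coe, mem_degExponents, eq_comm]
  rw [degRestrict, hgen, restrictSupport_eq_span, Algebra.adjoin_eq_span_of_subset]
  refine subset_trans (fun f hf => ?_) Submodule.subset_span
  induction hf using Submonoid.closure_induction with
  | mem f hf => exact hf
  | one => exact ⟨0, (degExponents ψ H).zero_mem, rfl⟩
  | mul f g _ _ hf hg =>
    obtain ⟨⟨μ, hμ, rfl⟩, ⟨ν, hν, rfl⟩⟩ := And.intro hf hg
    exact ⟨μ + ν, add_mem hμ hν, by simp [monomial_mul]⟩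

lemma mem_degRestrict_iff {f : MvPolynomial I A} :
    f ∈ degRestrict A ψ H ↔ ↑f.support ⊆ (degExponents ψ H : Set (I →₀ ℕ)) := by
  rw [← Subalgebra.mem_toSubmodule, degRestrict_toSubmodule, mem_restrictSupport_iff]

lemma monomial_mem_degRestrict {μ : I →₀ ℕ} (hμ : μ ∈ degExponents ψ H) (c : A) :
    monomial μ c ∈ degRestrict A ψ H := by
  rw [← Subalgebra.mem_toSubmodule, degRestrict_toSubmodule, monomial_mem_restrictSupport]
  exact Or.inl hμ

lemma monomial_one_mem_degRestrict_iff [Nontrivial A] {μ : I →₀ ℕ} :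
    monomial μ (1 : A) ∈ degRestrict A ψ H ↔ μ ∈ degExponents ψ H := by
  rw [← Subalgebra.mem_toSubmodule, degRestrict_toSubmodule, monomial_mem_restrictSupport]
  simp

/-- Each term of such an element is a generator times a monomial whose degree is a difference of
two degrees in `H`, hence a monomial of `S`. -/
lemma idealRestrict_span_monomial_le {ι : Type*} (P : Set ι) (e : ι → I →₀ ℕ)
    (he : ∀ i ∈ P, e i ∈ degExponents ψ H) :
    idealRestrict ψ H (Ideal.span ((fun i => monomial (e i) (1 : A)) '' P)) ≤
      Ideal.span {s : degRestrict A ψ H | ∃ i ∈ P, (s : MvPolynomial I A) = monomial (e i) 1} := by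
  classical
  intro x hx
  rw [idealRestrict, Ideal.mem_comap, ← Set.image_image (fun ν => monomial ν (1 : A)),
    mem_ideal_span_monomial_image] at hx
  have hsupp := mem_degRestrict_iff.1 x.2
  have hx_eq : x = ∑ μ ∈ (x : MvPolynomial I A).support.attach,
      ⟨_, monomial_mem_degRestrict (hsupp μ.2) (coeff μ (x : MvPolynomial I A))⟩ :=
    Subtype.ext <| by
      rw [AddSubmonoidClass.coe_finsetSum, Finset.sum_attach _
        (fun μ => monomial μ (coeff μ (x : MvPolynomial I A)))]
      exact as_sum _
  rw [hx_eq]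
  refine Ideal.sum_mem _ fun μ _ => ?_
  obtain ⟨_, ⟨i, hi, rfl⟩, hle⟩ := hx μ μ.2
  have hfactor : (⟨_, monomial_mem_degRestrict (hsupp μ.2) (coeff μ (x : MvPolynomial I A))⟩ :
      degRestrict A ψ H) =
      ⟨_, monomial_mem_degRestrict (tsub_mem_degExponents (hsupp μ.2) (he i hi) hle)
        (coeff μ (x : MvPolynomial I A))⟩ * ⟨_, monomial_mem_degRestrict (he i hi) 1⟩ :=
    Subtype.ext <| by simp [monomial_mul, tsub_add_cancel_of_le hle]
  rw [hfactor]
  exact Ideal.mul_mem_left _ _ (Ideal.subset_span ⟨i, hi, rfl⟩)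

end degExponents

lemma exists_mem_Emin_le {𝔞 : Ideal (MvPolynomial I A)} {μ : I →₀ ℕ}
    (h : monomial μ (1 : A) ∈ 𝔞) : ∃ ε ∈ Emin 𝔞, ε ≤ μ := by
  obtain ⟨ε, ⟨hε, hεμ⟩, hmin⟩ := (wellFounded_lt (α := I →₀ ℕ)).has_min
    {ν | monomial ν (1 : A) ∈ 𝔞 ∧ ν ≤ μ} ⟨μ, show _ ∧ _ from ⟨h, le_rfl⟩⟩
  exact ⟨ε, ⟨hε, fun ν hν hle => eq_of_le_of_not_lt hle (hmin ν ⟨hν, hle.trans hεμ⟩)⟩, hεμ⟩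

/-- `m = [G : H] · deg μ` satisfies both conditions defining `m_μ`, so the infimum is attained. -/
lemma mdeg_spec {ψ : (I →₀ ℤ) →+ G} {H : AddSubgroup G} (hH : H.FiniteIndex)
    {𝔞 : Ideal (MvPolynomial I A)} {μ : I →₀ ℕ} (hμ : monomial μ (1 : A) ∈ 𝔞) :
    monomial (mdeg ψ H 𝔞 μ • suppInd μ) (1 : A) ∈ 𝔞 ∧
      monomial (mdeg ψ H 𝔞 μ • suppInd μ) (1 : A) ∈ degRestrict A ψ H := by
  refine Nat.sInf_mem (s := {m | monomial (m • suppInd μ) (1 : A) ∈ 𝔞 ∧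
    monomial (m • suppInd μ) (1 : A) ∈ degRestrict A ψ H})
    ⟨H.index * μ.degree, ?_, monomial_mem_degRestrict ?_ 1⟩
  · refine monomial_one_mem_of_le hμ (le_smul_suppInd fun i => ?_)
    exact (μ.le_degree i).trans (Nat.le_mul_of_pos_left _ (Nat.pos_of_ne_zero hH.index_ne_zero))
  · rw [degExponents, AddSubmonoid.mem_comap, mul_smul, map_nsmul]
    exact H.nsmul_index_mem _

lemma mvFloor_eq_span_of_eq_span {𝔞 : Ideal (MvPolynomial I A)} {F : Set (I →₀ ℕ)}
    (hF : 𝔞 = Ideal.span ((fun μ => monomial μ (1 : A)) '' F)) :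
    mvFloor 𝔞 = Ideal.span ((fun μ => monomial (suppInd μ) (1 : A)) '' F) := by
  refine le_antisymm ?_ ?_
  · rw [mvFloor, Ideal.span_le]
    rintro _ ⟨ν, hν, rfl⟩
    rcases subsingleton_or_nontrivial A with hA | hA
    · simp [Subsingleton.elim (monomial (suppInd ν) (1 : A)) 0]
    rw [hF, mem_ideal_span_monomial_image] at hν
    obtain ⟨μ, hμ, hle⟩ := hν ν (by classical simp [coeff_monomial])
    exact monomial_one_mem_of_le (Ideal.subset_span ⟨μ, hμ, rfl⟩) (suppInd_mono hle)
  · rw [Ideal.span_le]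
    rintro _ ⟨μ, hμ, rfl⟩
    have h𝔞 : monomial μ (1 : A) ∈ 𝔞 := by rw [hF]; exact Ideal.subset_span ⟨μ, hμ, rfl⟩
    exact Ideal.subset_span ⟨μ, h𝔞, rfl⟩

namespace IsMonomialIdeal

variable {𝔞 : Ideal (MvPolynomial I A)}

lemma le_mvFloor (h : IsMonomialIdeal 𝔞) : 𝔞 ≤ mvFloor 𝔞 := by
  obtain ⟨E, hE⟩ := h
  conv_lhs => rw [hE]
  rw [Ideal.span_le]
  rintro _ ⟨μ, hμ, rfl⟩
  have h𝔞 : monomial μ (1 : A) ∈ 𝔞 := by rw [hE]; exact Ideal.subset_span ⟨μ, hμ, rfl⟩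
  exact monomial_one_mem_of_le (Ideal.subset_span ⟨μ, h𝔞, rfl⟩) (suppInd_le μ)

lemma exists_finset_eq_span (h : IsMonomialIdeal 𝔞) (hfg : 𝔞.FG) :
    ∃ F : Finset (I →₀ ℕ), 𝔞 = Ideal.span ((fun μ => monomial μ (1 : A)) '' F) := by
  classical
  obtain ⟨E, rfl⟩ := h
  obtain ⟨t, ht, heq⟩ := (Submodule.fg_span_iff_fg_span_finset_subset _).1 hfg
  obtain ⟨F, -, rfl⟩ := Finset.subset_set_image_iff.1 ht
  exact ⟨F, by rw [Ideal.span, heq, Finset.coe_image]⟩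

lemma fg_mvFloor (h : IsMonomialIdeal 𝔞) (hfg : 𝔞.FG) : (mvFloor 𝔞).FG := by
  obtain ⟨F, hF⟩ := h.exists_finset_eq_span hfg
  rw [mvFloor_eq_span_of_eq_span hF]
  exact Submodule.fg_span (F.finite_toSet.image _)

end IsMonomialIdeal

section floorH

variable {ψ : (I →₀ ℤ) →+ G} {H : AddSubgroup G} {𝔞 : Ideal (MvPolynomial I A)}

/-- `⌊𝔞⌋ ⊆ √(⌊𝔞⌋_H R)`: for `X^ν ∈ 𝔞` pick `ε ∈ E(𝔞)` below `ν`; then `X^(m_ε • sq ν)` is a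
multiple of the generator `X^(m_ε • sq ε)`. -/
lemma mvFloor_le_radical_span_mdeg (ψ : (I →₀ ℤ) →+ G) (H : AddSubgroup G) :
    mvFloor 𝔞 ≤ (Ideal.span
      ((fun μ => monomial (mdeg ψ H 𝔞 μ • suppInd μ) (1 : A)) '' Emin 𝔞)).radical := by
  rw [mvFloor, Ideal.span_le]
  rintro _ ⟨ν, hν, rfl⟩
  obtain ⟨ε, hε, hεν⟩ := exists_mem_Emin_le hν
  refine ⟨mdeg ψ H 𝔞 ε, ?_⟩
  rw [monomial_pow, one_pow]
  exact monomial_one_mem_of_le (Ideal.subset_span ⟨ε, hε, rfl⟩)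
    (nsmul_le_nsmul_right (suppInd_mono hεν) _)

lemma idealRestrict_span_mdeg_le_floorH (hH : H.FiniteIndex) :
    idealRestrict ψ H (Ideal.span
      ((fun μ => monomial (mdeg ψ H 𝔞 μ • suppInd μ) (1 : A)) '' Emin 𝔞)) ≤ floorH ψ H 𝔞 := by
  rcases subsingleton_or_nontrivial A with hA | hA
  · exact le_of_subsingleton
  exact idealRestrict_span_monomial_le _ _ fun μ hμ =>
    monomial_one_mem_degRestrict_iff.1 (mdeg_spec hH hμ.1).2

lemma floorH_le_idealRestrict (hH : H.FiniteIndex) : floorH ψ H 𝔞 ≤ idealRestrict ψ H 𝔞 := by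
  rw [floorH, Ideal.span_le]
  rintro s ⟨μ, hμ, hs⟩
  change (s : MvPolynomial I A) ∈ 𝔞
  rw [hs]
  exact (mdeg_spec hH hμ.1).1

lemma exists_pow_idealRestrict_mvFloor_le_floorH (hH : H.FiniteIndex) (h : IsMonomialIdeal 𝔞)
    (hfg : 𝔞.FG) : ∃ k, idealRestrict ψ H (mvFloor 𝔞) ^ k ≤ floorH ψ H 𝔞 := by
  obtain ⟨k, hk⟩ := Ideal.exists_pow_le_of_le_radical_of_fg
    (mvFloor_le_radical_span_mdeg ψ H) (h.fg_mvFloor hfg)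
  exact ⟨k, (Ideal.le_comap_pow _ k).trans
    ((Ideal.comap_mono hk).trans (idealRestrict_span_mdeg_le_floorH hH))⟩

end floorH

end

lemma Ideal.exists_pow_le_of_pow_le_of_exists_pow_le {R : Type*} [CommSemiring R]
    {P Q J : Ideal R} {k : ℕ} (hPQ : P ^ k ≤ Q) : (∃ n, Q ^ n ≤ J) → ∃ n, P ^ n ≤ J
  | ⟨n, hn⟩ => ⟨k * n, by rw [pow_mul]; exact (Ideal.pow_right_mono hPQ n).trans hn⟩

theorem torsion_idealRestrict_eq_torsion_floorH_eq_torsion_floorRestrict_general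
    {A : Type u} [CommRing A] {I : Type v}
    {G : Type w} [AddCommGroup G] (ψ : (I →₀ ℤ) →+ G)
    (H : AddSubgroup G) (hH : H.FiniteIndex)
    (𝔞 : Ideal (MvPolynomial I A)) (h : IsMonomialIdeal 𝔞) (hfg : 𝔞.FG) :
    ∀ (M : Type (max u v)) [AddCommGroup M] [Module (degRestrict A ψ H) M] (x : M),
      List.TFAE
        [∃ n : ℕ, (idealRestrict ψ H 𝔞) ^ n ≤ Ideal.torsionOf (degRestrict A ψ H) M x,
          ∃ n : ℕ, (floorH ψ H 𝔞) ^ n ≤ Ideal.torsionOf (degRestrict A ψ H) M x,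
          ∃ n : ℕ, (idealRestrict ψ H (mvFloor 𝔞)) ^ n ≤
            Ideal.torsionOf (degRestrict A ψ H) M x] := by
  intro M _ _ x
  obtain ⟨k, h32⟩ := exists_pow_idealRestrict_mvFloor_le_floorH hH h hfg
  tfae_have 1 → 2 := Ideal.exists_pow_le_of_pow_le_of_exists_pow_le (k := 1)
    ((pow_one _).trans_le (floorH_le_idealRestrict hH))
  tfae_have 2 → 3 := Ideal.exists_pow_le_of_pow_le_of_exists_pow_le h32
  tfae_have 3 → 1 := Ideal.exists_pow_le_of_pow_le_of_exists_pow_le (k := 1)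
    ((pow_one _).trans_le (Ideal.comap_mono h.le_mvFloor))
  tfae_finish

/-- Proposition 2.30: for a finitely generated monomial ideal `𝔞`
of `R = A[(X_i)_{i ∈ I}]` and `H ≤ G` of finite index, the torsion functors
`Γ_{𝔞_(H)}`, `Γ_{⌊𝔞⌋_H}` and `Γ_{⌊𝔞⌋_(H)}` over `S = R_(H)` coincide. -/
theorem torsion_idealRestrict_eq_torsion_floorH_eq_torsion_floorRestrict
    {A : Type u} [CommRing A] {I : Type v}
    {G : Type w} [AddCommGroup G] (ψ : (I →₀ ℤ) →+ G) (hψ : Function.Surjective ψ)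
    (H : AddSubgroup G) (hH : H.FiniteIndex)
    (𝔞 : Ideal (MvPolynomial I A)) (h : IsMonomialIdeal 𝔞) (hfg : 𝔞.FG) :
    ∀ (M : Type (max u v)) [AddCommGroup M] [Module (degRestrict A ψ H) M] (x : M),
      List.TFAE
        [∃ n : ℕ, (idealRestrict ψ H 𝔞) ^ n ≤ Ideal.torsionOf (degRestrict A ψ H) M x,
          ∃ n : ℕ, (floorH ψ H 𝔞) ^ n ≤ Ideal.torsionOf (degRestrict A ψ H) M x,
          ∃ n : ℕ, (idealRestrict ψ H (mvFloor 𝔞)) ^ n ≤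
            Ideal.torsionOf (degRestrict A ψ H) M x] :=
  torsion_idealRestrict_eq_torsion_floorH_eq_torsion_floorRestrict_general ψ H hH 𝔞 h hfg
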